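/- There exists a Zariski-open dense subset U of the determinantal variety M = {X ∈ ℝ^{m×n} : rank X ≤ r} such that for every X* ∈ U, the variety Y_{X*} (the common zero locus of all the polynomials q_{ℓ,j}, ℓ ∈ [m], j ∈ [n]) equals exactly the finite set {(B*_Π, C*_Π) : Π ∈ 𝒫_m}, where for each Π ∈ 𝒫_m, (B*_Π, C*_Π) is the unique factorization Π X* = B*_Π C*_Π with the top r×r block of B*_Π equal to the identity matrix. -/

import Mathlib

/-- `P` is an `m × m` permutation matrix. -/
def IsPermMatrix {m : ℕ} (P : Matrix (Fin m) (Fin m) ℝ) : Prop :=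
  ∃ σ : Equiv.Perm (Fin m), P = σ.permMatrix ℝ

/-- The determinantal variety `M = {X ∈ ℝ^{m×n} : rank X ≤ r}`. -/
def detVar (m n r : ℕ) : Set (Matrix (Fin m) (Fin n) ℝ) :=
  {X | X.rank ≤ r}

/-- Evaluation of a polynomial in the matrix entries at a matrix. -/
noncomputable def polyEval {m n : ℕ} (p : MvPolynomial (Fin m × Fin n) ℝ)
    (X : Matrix (Fin m) (Fin n) ℝ) : ℝ :=
  MvPolynomial.eval (fun q => X q.1 q.2) p

/-- `U` is a nonempty Zariski-open (hence dense) subset of the determinantal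
variety. -/
def IsZariskiOpenDense (m n r : ℕ) (U : Set (Matrix (Fin m) (Fin n) ℝ)) : Prop :=
  ∃ (k : ℕ) (ps : Fin k → MvPolynomial (Fin m × Fin n) ℝ),
    (∃ (i : Fin k) (X : Matrix (Fin m) (Fin n) ℝ),
        X ∈ detVar m n r ∧ polyEval (ps i) X ≠ 0) ∧
    U = {X ∈ detVar m n r | ∃ i : Fin k, polyEval (ps i) X ≠ 0}

/-- The top `r × r` block of the `m × r` matrix `B` is the identity matrix. -/
def topIdentity {m r : ℕ} (h : r ≤ m) (B : Matrix (Fin m) (Fin r) ℝ) : Prop :=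
  ∀ i k : Fin r, B (Fin.castLE h i) k = if i = k then (1 : ℝ) else 0

/-- The variety `Y_{X*}`: pairs `(B, C)` with identity top `r × r` block of `B`
on which all the polynomials `q_{ℓ,j}(B,C) = Σᵢ (bᵢᵀcⱼ)^ℓ − Σᵢ (x*ᵢⱼ)^ℓ`,
`ℓ ∈ [m]`, `j ∈ [n]`, vanish. -/
def YX {m n r : ℕ} (h : r ≤ m) (Xstar : Matrix (Fin m) (Fin n) ℝ) :
    Set (Matrix (Fin m) (Fin r) ℝ × Matrix (Fin r) (Fin n) ℝ) :=
  {p | topIdentity h p.1 ∧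
    ∀ ℓ ∈ Finset.Icc 1 m, ∀ j : Fin n,
      ∑ i : Fin m, ((p.1 * p.2) i j) ^ ℓ = ∑ i : Fin m, (Xstar i j) ^ ℓ}


/-!
By Newton's identities, the equations `q_{ℓ,j} = 0` for `ℓ ≤ m` say exactly that each column of
`B C` is a permutation of the corresponding column of `X*`: `B C` is a column-wise shuffle of
`X*`. For generic `X*` of rank `≤ r`, every shuffle that does not apply one and the same
permutation `Π` to all columns has a nonzero `(r+1)`-minor, so it cannot equal the rank `≤ r`
matrix `B C`; hence `B C = Π X*`. Generic `X*` also has every `r` rows independent, which makes the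
factorization of `Π X*` with identity top block unique. Both conditions are the nonvanishing of
one polynomial, a product of sums of squares of minors. It does not vanish identically on the
determinantal variety: composed with `(B, C) ↦ B C` it becomes a product in the domain
`ℝ[B, C]` of factors each of which is nonzero at an explicit `0/1` pair `(B, C)`.
-/

open MvPolynomial Finset Matrix

section PowerSums

variable {K : Type*} [Field K] [CharZero K]

theorem esymm_eq_of_psum_eq {σ : Type*} [Fintype σ] {u v : σ → K}
    (h : ∀ ℓ ∈ Icc 1 (Fintype.card σ), ∑ i, u i ^ ℓ = ∑ i, v i ^ ℓ) {k : ℕ}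
    (hk : k ≤ Fintype.card σ) : aeval u (esymm σ K k) = aeval v (esymm σ K k) := by
  induction k using Nat.strong_induction_on with
  | _ k ih =>
  have newton (w : σ → K) := congrArg (aeval w) (mul_esymm_eq_sum σ K k)
  simp only [map_mul, map_pow, map_natCast, map_neg, map_one, map_sum, psum, aeval_X] at newton
  rcases Nat.eq_zero_or_pos k with rfl | hk0
  · simp
  refine mul_left_cancel₀ (Nat.cast_ne_zero.mpr hk0.ne') ?_
  rw [newton u, newton v]
  congr 1
  refine sum_congr rfl fun a ha => ?_
  rw [mem_filter, HasAntidiagonal.mem_antidiagonal] at ha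
  rw [ih a.1 ha.2 (by omega), h a.2 (mem_Icc.mpr ⟨by omega, by omega⟩)]

theorem map_univ_val_eq_of_psum_eq {σ : Type*} [Fintype σ] {u v : σ → K}
    (h : ∀ ℓ ∈ Icc 1 (Fintype.card σ), ∑ i, u i ^ ℓ = ∑ i, v i ^ ℓ) :
    univ.val.map u = univ.val.map v := by
  have hprod : ((univ.val.map u).map fun a => Polynomial.X - Polynomial.C a).prod =
      ((univ.val.map v).map fun a => Polynomial.X - Polynomial.C a).prod := by
    simp only [Multiset.prod_X_sub_X_eq_sum_esymm, Multiset.card_map, card_val, card_univ]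
    refine sum_congr rfl fun k hk => ?_
    rw [← aeval_esymm_eq_multiset_esymm σ K, ← aeval_esymm_eq_multiset_esymm σ K,
      esymm_eq_of_psum_eq h (Nat.lt_succ_iff.mp (mem_range.mp hk))]
  simpa only [Polynomial.roots_multiset_prod_X_sub_C] using congrArg Polynomial.roots hprod

theorem Equiv.Perm.exists_eq_comp_of_map_univ_val_eq {ι α : Type*} [Fintype ι] [DecidableEq α]
    {u v : ι → α} (h : univ.val.map u = univ.val.map v) : ∃ σ : Equiv.Perm ι, u = v ∘ σ := by
  have hfib (a : α) : Fintype.card {i // u i = a} = Fintype.card {i // v i = a} := by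
    simpa [Multiset.count_map, Fintype.card_subtype, Finset.filter, eq_comm] using
      congrArg (Multiset.count a) h
  exact ⟨Equiv.ofFiberEquiv fun a => Fintype.equivOfCardEq (hfib a),
    funext fun i => (Equiv.ofFiberEquiv_map _ i).symm⟩

theorem Equiv.Perm.exists_eq_comp_of_psum_eq {m : ℕ} {u v : Fin m → K}
    (h : ∀ ℓ ∈ Icc 1 m, ∑ i, u i ^ ℓ = ∑ i, v i ^ ℓ) : ∃ σ : Equiv.Perm (Fin m), u = v ∘ σ := by
  classical
  exact exists_eq_comp_of_map_univ_val_eq (map_univ_val_eq_of_psum_eq (by simpa using h))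

end PowerSums

section Matrices

variable {K : Type*} [Field K]

theorem Matrix.exists_eq_mul_of_rank_le {m n : Type*} [Fintype m] [Fintype n] [DecidableEq n]
    {A : Matrix m n K} {r : ℕ} (h : A.rank ≤ r) :
    ∃ (B : Matrix m (Fin r) K) (C : Matrix (Fin r) n K), A = B * C := by
  set V := LinearMap.range A.mulVecLin
  have hV : Module.rank K V ≤ r := by
    rw [← Module.finrank_eq_rank]
    exact_mod_cast h
  obtain ⟨ι, hι⟩ := Module.Free.exists_linearMap_injective_of_linearIndependent_of_lift_rank_le
    (M := V) (Pi.basisFun K (Fin r)).linearIndependent (by simpa using hV)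
  obtain ⟨ψ, hψ⟩ := ι.exists_leftInverse_of_injective (LinearMap.ker_eq_bot.mpr hι)
  refine ⟨LinearMap.toMatrix' (V.subtype ∘ₗ ψ),
    LinearMap.toMatrix' (ι ∘ₗ A.mulVecLin.rangeRestrict), ?_⟩
  rw [← LinearMap.toMatrix'_comp, LinearMap.comp_assoc, ← LinearMap.comp_assoc _ ι ψ, hψ,
    LinearMap.id_comp]
  exact (LinearMap.toMatrix'_toLin' A).symm

theorem Matrix.card_le_rank_of_det_submatrix_ne_zero {m n ι : Type*} [Fintype m] [Fintype n]
    [Fintype ι] [DecidableEq ι] {A : Matrix m n K} {f : ι → m} {g : ι → n}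
    (h : (A.submatrix f g).det ≠ 0) : Fintype.card ι ≤ A.rank :=
  (rank_of_isUnit _ ((isUnit_iff_isUnit_det _).mpr (isUnit_iff_ne_zero.mpr h))).symm.le.trans
    (rank_submatrix_le A f g)

theorem Matrix.eq_zero_of_rank_eq_zero {m n : Type*} [Fintype m] [Fintype n]
    {A : Matrix m n K} (h : A.rank = 0) : A = 0 := by
  ext i j
  by_contra hij
  have := card_le_rank_of_det_submatrix_ne_zero (f := fun _ : Fin 1 => i) (g := fun _ => j)
    (by simpa [det_unique] using hij)
  simp_all

theorem Equiv.Perm.permMatrix_mul_eq_submatrix {m n : Type*} [Fintype m] [DecidableEq m]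
    (σ : Equiv.Perm m) (X : Matrix m n K) : σ.permMatrix K * X = X.submatrix σ id :=
  PEquiv.toMatrix_toPEquiv_mul σ X

end Matrices

def shuffleCols {m n α : Type*} (π : n → Equiv.Perm m) (X : Matrix m n α) : Matrix m n α :=
  Matrix.of fun i j => X (π j i) j

def RowsInGeneralPosition {m n : ℕ} (r : ℕ) (X : Matrix (Fin m) (Fin n) ℝ) : Prop :=
  ∀ f : Fin r ↪ Fin m, ∃ g : Fin r → Fin n, (X.submatrix f g).det ≠ 0

def IsShuffleRigid {m n : ℕ} (r : ℕ) (X : Matrix (Fin m) (Fin n) ℝ) : Prop :=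
  ∀ π : Fin n → Equiv.Perm (Fin m), (shuffleCols π X).rank ≤ r →
    ∃ σ : Equiv.Perm (Fin m), shuffleCols π X = X.submatrix σ id

section Factorization

variable {m n r : ℕ} (hrm : r ≤ m)

theorem topIdentity_iff_submatrix_eq_one (B : Matrix (Fin m) (Fin r) ℝ) :
    topIdentity hrm B ↔ B.submatrix (Fin.castLE hrm) id = 1 := by
  simp [topIdentity, ← Matrix.ext_iff, one_apply]

theorem existsUnique_topIdentity_factorization {Y : Matrix (Fin m) (Fin n) ℝ} (hY : Y.rank ≤ r)
    {g : Fin r → Fin n} (hg : (Y.submatrix (Fin.castLE hrm) g).det ≠ 0) :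
    ∃! p : Matrix (Fin m) (Fin r) ℝ × Matrix (Fin r) (Fin n) ℝ,
      topIdentity hrm p.1 ∧ Y = p.1 * p.2 := by
  set top := Fin.castLE hrm
  set D := Y.submatrix top g
  have determined (B : Matrix (Fin m) (Fin r) ℝ) (C : Matrix (Fin r) (Fin n) ℝ)
      (hB : topIdentity hrm B) (hBC : Y = B * C) :
      (B, C) = (Y.submatrix id g * D⁻¹, Y.submatrix top id) := by
    rw [topIdentity_iff_submatrix_eq_one] at hB
    have hC : C = Y.submatrix top id := by
      rw [hBC, submatrix_mul _ _ _ id _ Function.bijective_id, hB, Matrix.one_mul, submatrix_id_id]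
    have hBD : Y.submatrix id g = B * D := by
      rw [hBC, submatrix_mul _ _ _ id _ Function.bijective_id, submatrix_id_id, hC,
        submatrix_submatrix]
      rfl
    rw [hBD, mul_nonsing_inv_cancel_right _ _ (isUnit_iff_ne_zero.mpr hg), ← hC]
  obtain ⟨B₀, C₀, hY₀⟩ := exists_eq_mul_of_rank_le hY
  set A := B₀.submatrix top id
  have hA : IsUnit A.det := by
    rw [isUnit_iff_ne_zero]
    refine left_ne_zero_of_mul (a := A.det) (b := (C₀.submatrix id g).det) ?_
    rwa [← det_mul, ← submatrix_mul _ _ _ id _ Function.bijective_id, ← hY₀]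
  refine existsUnique_of_exists_of_unique ⟨(B₀ * A⁻¹, A * C₀), ?_, ?_⟩ ?_
  · rw [topIdentity_iff_submatrix_eq_one, submatrix_mul _ _ _ id _ Function.bijective_id,
      submatrix_id_id, mul_nonsing_inv _ hA]
  · rw [hY₀, Matrix.mul_assoc, ← Matrix.mul_assoc A⁻¹, nonsing_inv_mul _ hA, Matrix.one_mul]
  · rintro ⟨B, C⟩ ⟨B', C'⟩ ⟨hB, hBC⟩ ⟨hB', hBC'⟩
    exact (determined B C hB hBC).trans (determined B' C' hB' hBC').symm

theorem existsUnique_topIdentity_factorization_submatrix {X : Matrix (Fin m) (Fin n) ℝ}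
    (hX : X.rank ≤ r) (hrows : RowsInGeneralPosition r X) (σ : Equiv.Perm (Fin m)) :
    ∃! p : Matrix (Fin m) (Fin r) ℝ × Matrix (Fin r) (Fin n) ℝ,
      topIdentity hrm p.1 ∧ X.submatrix σ id = p.1 * p.2 := by
  obtain ⟨g, hg⟩ := hrows ((Fin.castLEEmb hrm).trans σ.toEmbedding)
  exact existsUnique_topIdentity_factorization hrm ((rank_submatrix_le _ _ _).trans hX) hg

theorem YX_eq_of_isShuffleRigid {X : Matrix (Fin m) (Fin n) ℝ} (hX : IsShuffleRigid r X) :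
    YX hrm X =
      {p | topIdentity hrm p.1 ∧ ∃ σ : Equiv.Perm (Fin m), X.submatrix σ id = p.1 * p.2} := by
  ext ⟨B, C⟩
  refine and_congr_right fun _ => ⟨fun hpow => ?_, ?_⟩
  · have hcol (j : Fin n) :
        ∃ τ : Equiv.Perm (Fin m), (fun i => (B * C) i j) = (fun i => X i j) ∘ τ :=
      Equiv.Perm.exists_eq_comp_of_psum_eq fun ℓ hℓ => hpow ℓ hℓ j
    choose π hπ using hcol
    have hshuffle : B * C = shuffleCols π X := by
      ext i j
      exact congrFun (hπ j) i
    obtain ⟨σ, hσ⟩ := hX π (hshuffle ▸ (rank_mul_le_left B C).trans (rank_le_width B))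
    exact ⟨σ, hσ.symm.trans hshuffle.symm⟩
  · rintro ⟨σ, hσ⟩ ℓ - j
    simp only [← hσ, submatrix_apply, id]
    exact Equiv.sum_comp σ fun i => X i j ^ ℓ

end Factorization

section Polynomials

variable {m n : ℕ}

noncomputable def shuffledMinor {s : ℕ} (π : Fin n → Equiv.Perm (Fin m)) (f : Fin s → Fin m)
    (g : Fin s → Fin n) : MvPolynomial (Fin m × Fin n) ℝ :=
  (Matrix.of fun k l => X (π (g l) (f k), g l)).det

noncomputable def sumSqShuffledMinors {s : ℕ} (π : Fin n → Equiv.Perm (Fin m))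
    (F : Finset (Fin s → Fin m)) : MvPolynomial (Fin m × Fin n) ℝ :=
  ∑ f ∈ F, ∑ g : Fin s → Fin n, shuffledMinor π f g ^ 2

variable (m n) in
open scoped Classical in
noncomputable def genericPoly (r : ℕ) : MvPolynomial (Fin m × Fin n) ℝ :=
  (∏ f : Fin r ↪ Fin m, sumSqShuffledMinors 1 {⇑f}) *
    ∏ π ∈ univ.filter fun π : Fin n → Equiv.Perm (Fin m) => ¬∃ σ, ∀ j, π j = σ,
      sumSqShuffledMinors (s := r + 1) π univ

theorem polyEval_shuffledMinor {s : ℕ} (π : Fin n → Equiv.Perm (Fin m)) (f : Fin s → Fin m)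
    (g : Fin s → Fin n) (X : Matrix (Fin m) (Fin n) ℝ) :
    polyEval (shuffledMinor π f g) X = ((shuffleCols π X).submatrix f g).det := by
  rw [polyEval, shuffledMinor, RingHom.map_det]
  congr 1
  ext k l
  simp [shuffleCols]

theorem polyEval_sumSqShuffledMinors_ne_zero_iff {s : ℕ} (π : Fin n → Equiv.Perm (Fin m))
    (F : Finset (Fin s → Fin m)) (X : Matrix (Fin m) (Fin n) ℝ) :
    polyEval (sumSqShuffledMinors π F) X ≠ 0 ↔
      ∃ f ∈ F, ∃ g, ((shuffleCols π X).submatrix f g).det ≠ 0 := by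
  have hsum : polyEval (sumSqShuffledMinors π F) X =
      ∑ f ∈ F, ∑ g, ((shuffleCols π X).submatrix f g).det ^ 2 := by
    simp only [sumSqShuffledMinors, polyEval, map_sum, map_pow, ← polyEval_shuffledMinor]
  rw [hsum, Ne, sum_eq_zero_iff_of_nonneg fun f _ => sum_nonneg fun g _ => sq_nonneg _]
  simp [sum_eq_zero_iff_of_nonneg, sq_nonneg]

theorem rowsInGeneralPosition_of_polyEval_genericPoly_ne_zero {r : ℕ}
    {X : Matrix (Fin m) (Fin n) ℝ} (h : polyEval (genericPoly m n r) X ≠ 0) :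
    RowsInGeneralPosition r X := by
  intro f
  simp only [genericPoly, polyEval, map_mul, map_prod] at h
  obtain ⟨_, hf, g, hg⟩ := (polyEval_sumSqShuffledMinors_ne_zero_iff 1 {⇑f} X).mp
    (prod_ne_zero_iff.mp (left_ne_zero_of_mul h) f (mem_univ f))
  rw [mem_singleton.mp hf] at hg
  exact ⟨g, hg⟩

theorem isShuffleRigid_of_polyEval_genericPoly_ne_zero {r : ℕ}
    {X : Matrix (Fin m) (Fin n) ℝ} (h : polyEval (genericPoly m n r) X ≠ 0) :
    IsShuffleRigid r X := by
  intro π hrank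
  by_contra hπ
  have hconst : ¬∃ σ, ∀ j, π j = σ := by
    rintro ⟨σ, hσ⟩
    exact hπ ⟨σ, by simp only [shuffleCols, hσ]; rfl⟩
  simp only [genericPoly, polyEval, map_mul, map_prod] at h
  obtain ⟨f, -, g, hfg⟩ := (polyEval_sumSqShuffledMinors_ne_zero_iff π univ X).mp
    (prod_ne_zero_iff.mp (right_ne_zero_of_mul h) π (by simpa using hconst))
  have := card_le_rank_of_det_submatrix_ne_zero hfg
  simp only [Fintype.card_fin] at this
  omega

end Polynomials

section Witnesses

variable {m n : ℕ}

variable (m n) in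
noncomputable def substMul (r : ℕ) :
    MvPolynomial (Fin m × Fin n) ℝ →ₐ[ℝ] MvPolynomial ((Fin m × Fin r) ⊕ (Fin r × Fin n)) ℝ :=
  bind₁ fun q => ∑ k, X (Sum.inl (q.1, k)) * X (Sum.inr (k, q.2))

theorem eval_substMul {r : ℕ} (B : Matrix (Fin m) (Fin r) ℝ) (C : Matrix (Fin r) (Fin n) ℝ)
    (p : MvPolynomial (Fin m × Fin n) ℝ) :
    eval (Sum.elim (fun q => B q.1 q.2) fun q => C q.1 q.2) (substMul m n r p) =
      polyEval p (B * C) := by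
  refine (eval₂Hom_bind₁ _ _ _ p).trans (congrArg (eval · p) (funext fun q => ?_))
  simp [Matrix.mul_apply]

theorem exists_polyEval_mul_ne_zero_iff {r : ℕ} (p : MvPolynomial (Fin m × Fin n) ℝ) :
    (∃ (B : Matrix (Fin m) (Fin r) ℝ) (C : Matrix (Fin r) (Fin n) ℝ), polyEval p (B * C) ≠ 0) ↔
      substMul m n r p ≠ 0 := by
  refine ⟨fun ⟨B, C, h⟩ hp => h (by rw [← eval_substMul, hp, map_zero]), fun hp => ?_⟩
  by_contra! h
  refine hp (MvPolynomial.funext fun y => ?_)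
  rw [map_zero, ← Sum.elim_comp_inl_inr y]
  exact (eval_substMul (fun i k => y (.inl (i, k))) (fun k j => y (.inr (k, j))) p).trans (h _ _)

/-- The witness `B * C` has entries `[i = α (γ j)]`: its rank is at most `r` however large `s`
is, while its shuffled `w × c` submatrix is the identity. -/
theorem exists_polyEval_mul_sumSqShuffledMinors_ne_zero {r s : ℕ}
    (π : Fin n → Equiv.Perm (Fin m)) {F : Finset (Fin s → Fin m)} (w : Fin s ↪ Fin m)
    (hw : ⇑w ∈ F) (c : Fin s ↪ Fin n) (α : Fin r → Fin m) (γ : Fin n → Fin r)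
    (hαγ : ∀ t, α (γ (c t)) = π (c t) (w t)) :
    ∃ (B : Matrix (Fin m) (Fin r) ℝ) (C : Matrix (Fin r) (Fin n) ℝ),
      polyEval (sumSqShuffledMinors π F) (B * C) ≠ 0 := by
  refine ⟨Matrix.of fun i k => if i = α k then (1 : ℝ) else 0,
    Matrix.of fun k j => if γ j = k then (1 : ℝ) else 0,
    (polyEval_sumSqShuffledMinors_ne_zero_iff π F _).mpr ⟨w, hw, c, ?_⟩⟩
  have hone : (shuffleCols π ((Matrix.of fun i k => if i = α k then (1 : ℝ) else 0) *
      Matrix.of fun k j => if γ j = k then (1 : ℝ) else 0)).submatrix w c = 1 := by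
    ext p t
    simp [shuffleCols, Matrix.mul_apply, hαγ, one_apply, eq_comm]
  simp [hone]

theorem Fin.exists_embedding_apply_zero_apply_one {s N : ℕ} (h : s + 2 ≤ N) {x y : Fin N}
    (hxy : x ≠ y) : ∃ e : Fin (s + 2) ↪ Fin N, e 0 = x ∧ e 1 = y := by
  obtain ⟨σ, hσ⟩ := Equiv.Perm.exists_extending_pair (Fin.castLE (by omega) : Fin 2 → Fin N)
    ![x, y] (Fin.castLE_injective _)
    (by simp [Function.Injective, Fin.forall_fin_two, hxy, hxy.symm])
  exact ⟨(Fin.castLEEmb h).trans σ.toEmbedding, hσ 0, hσ 1⟩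

theorem exists_polyEval_mul_sumSqShuffledMinors_one_singleton_ne_zero {s : ℕ} (hn : s + 1 ≤ n)
    (f : Fin (s + 1) ↪ Fin m) :
    ∃ (B : Matrix (Fin m) (Fin (s + 1)) ℝ) (C : Matrix (Fin (s + 1)) (Fin n) ℝ),
      polyEval (sumSqShuffledMinors 1 {⇑f}) (B * C) ≠ 0 := by
  let c := Fin.castLEEmb hn
  exact exists_polyEval_mul_sumSqShuffledMinors_ne_zero 1 f (mem_singleton_self _) c f
    (Function.invFun c) fun t => by rw [Function.leftInverse_invFun c.injective t]; rfl

theorem exists_polyEval_mul_sumSqShuffledMinors_univ_ne_zero {s : ℕ} (hm : s + 2 ≤ m)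
    (hn : s + 2 ≤ n) {π : Fin n → Equiv.Perm (Fin m)} (hπ : ¬∃ σ, ∀ j, π j = σ) :
    ∃ (B : Matrix (Fin m) (Fin (s + 1)) ℝ) (C : Matrix (Fin (s + 1)) (Fin n) ℝ),
      polyEval (sumSqShuffledMinors (s := s + 2) π univ) (B * C) ≠ 0 := by
  let j₁ : Fin n := ⟨0, by omega⟩
  obtain ⟨j₂, hj₂⟩ : ∃ j₂, π j₂ ≠ π j₁ := not_forall.mp (not_exists.mp hπ (π j₁))
  obtain ⟨i, hi⟩ : ∃ i, π j₁ i ≠ π j₂ i := by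
    by_contra! h
    exact hj₂ (Equiv.ext h).symm
  -- the shuffled entries `(i, j₁)` and `(b, j₂)` both read row `π j₁ i`, so the witness may have
  -- equal columns `j₁, j₂` whose shuffles are independent
  obtain ⟨b, hb⟩ : ∃ b, π j₂ b = π j₁ i := ⟨_, Equiv.apply_symm_apply _ _⟩
  have hib : i ≠ b := by
    rintro rfl
    exact hi hb.symm
  obtain ⟨w, hw₀, hw₁⟩ := Fin.exists_embedding_apply_zero_apply_one hm hib
  obtain ⟨c, hc₀, hc₁⟩ := Fin.exists_embedding_apply_zero_apply_one hn (x := j₁) (y := j₂)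
    (fun h => hj₂ (congrArg π h).symm)
  refine exists_polyEval_mul_sumSqShuffledMinors_ne_zero π w (mem_univ _) c
    (fun k => π (c k.succ) (w k.succ)) (Fin.predAbove 0 ∘ Function.invFun c) fun t => ?_
  rw [Function.comp_apply, Function.leftInverse_invFun c.injective t]
  cases t using Fin.cases with
  | zero => simp [hw₀, hw₁, hc₀, hc₁, hb]
  | succ u => rw [Fin.predAbove_zero_succ]

theorem exists_mem_detVar_polyEval_genericPoly_ne_zero {s : ℕ} (hm : s + 2 ≤ m)
    (hn : s + 2 ≤ n) : ∃ X ∈ detVar m n (s + 1), polyEval (genericPoly m n (s + 1)) X ≠ 0 := by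
  have hsubst : substMul m n (s + 1) (genericPoly m n (s + 1)) ≠ 0 := by
    rw [genericPoly, map_mul, map_prod, map_prod]
    refine mul_ne_zero (prod_ne_zero_iff.mpr fun f _ => ?_) (prod_ne_zero_iff.mpr fun π hπ => ?_)
    · exact (exists_polyEval_mul_ne_zero_iff _).mp
        (exists_polyEval_mul_sumSqShuffledMinors_one_singleton_ne_zero (by omega) f)
    · exact (exists_polyEval_mul_ne_zero_iff _).mp
        (exists_polyEval_mul_sumSqShuffledMinors_univ_ne_zero hm hn (mem_filter.mp hπ).2)
  obtain ⟨B, C, h⟩ := (exists_polyEval_mul_ne_zero_iff _).mpr hsubst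
  exact ⟨B * C, (rank_mul_le_left B C).trans (rank_le_width B), h⟩

end Witnesses

theorem rowsInGeneralPosition_zero {m n : ℕ} (X : Matrix (Fin m) (Fin n) ℝ) :
    RowsInGeneralPosition 0 X :=
  fun _ => ⟨Fin.elim0, by simp⟩

theorem isShuffleRigid_zero {m n : ℕ} {X : Matrix (Fin m) (Fin n) ℝ} (hX : X.rank ≤ 0) :
    IsShuffleRigid 0 X := by
  obtain rfl := eq_zero_of_rank_eq_zero (Nat.le_zero.mp hX)
  exact fun _ _ => ⟨1, rfl⟩

theorem isZariskiOpenDense_setOf_polyEval_ne_zero {m n r : ℕ} {p : MvPolynomial (Fin m × Fin n) ℝ}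
    (h : ∃ X ∈ detVar m n r, polyEval p X ≠ 0) :
    IsZariskiOpenDense m n r {X ∈ detVar m n r | polyEval p X ≠ 0} := by
  obtain ⟨X, hX, hp⟩ := h
  exact ⟨1, fun _ => p, ⟨0, X, hX, hp⟩, by simp⟩

/-- **Theorem 2 (UPCA).** There is a Zariski-open dense subset `U` of the
determinantal variety such that for every `X* ∈ U`: for each permutation
matrix `Π` there is a unique factorization `Π X* = B*_Π C*_Π` with identity
top `r × r` block of `B*_Π`, and `Y_{X*}` equals exactly the set
`{(B*_Π, C*_Π) : Π ∈ 𝒫_m}`. -/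
theorem stmt1 (m n r : ℕ) (hr : r < min m n) :
    ∃ U : Set (Matrix (Fin m) (Fin n) ℝ),
      IsZariskiOpenDense m n r U ∧
      ∀ Xstar ∈ U,
        (∀ Q : Matrix (Fin m) (Fin m) ℝ, IsPermMatrix Q →
          ∃! p : Matrix (Fin m) (Fin r) ℝ × Matrix (Fin r) (Fin n) ℝ,
            topIdentity (hr.trans_le (min_le_left m n)).le p.1 ∧
              Q * Xstar = p.1 * p.2) ∧
        YX (hr.trans_le (min_le_left m n)).le Xstar =
          {p | topIdentity (hr.trans_le (min_le_left m n)).le p.1 ∧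
            ∃ Q : Matrix (Fin m) (Fin m) ℝ, IsPermMatrix Q ∧
              Q * Xstar = p.1 * p.2} := by
  have hrm : r ≤ m := (hr.trans_le (min_le_left m n)).le
  obtain ⟨p, hp, hgeneric⟩ : ∃ p : MvPolynomial (Fin m × Fin n) ℝ,
      (∃ X ∈ detVar m n r, polyEval p X ≠ 0) ∧
      ∀ X ∈ detVar m n r, polyEval p X ≠ 0 → RowsInGeneralPosition r X ∧ IsShuffleRigid r X := by
    rcases r with _ | s
    -- `genericPoly m n 0` vanishes on `detVar m n 0 = {0}` as soon as `m, n ≥ 2`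
    · exact ⟨1, ⟨0, rank_zero.le, by simp [polyEval]⟩,
        fun X hX _ => ⟨rowsInGeneralPosition_zero X, isShuffleRigid_zero hX⟩⟩
    · exact ⟨genericPoly m n (s + 1), exists_mem_detVar_polyEval_genericPoly_ne_zero (by omega)
        (by omega), fun X _ h => ⟨rowsInGeneralPosition_of_polyEval_genericPoly_ne_zero h,
          isShuffleRigid_of_polyEval_genericPoly_ne_zero h⟩⟩
  refine ⟨_, isZariskiOpenDense_setOf_polyEval_ne_zero hp, fun X ⟨hX, hpX⟩ => ?_⟩
  obtain ⟨hrows, hrigid⟩ := hgeneric X hX hpX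
  refine ⟨?_, ?_⟩
  · rintro Q ⟨σ, rfl⟩
    rw [Equiv.Perm.permMatrix_mul_eq_submatrix]
    exact existsUnique_topIdentity_factorization_submatrix hrm hX hrows σ
  · rw [YX_eq_of_isShuffleRigid hrm hrigid]
    simp [IsPermMatrix, Equiv.Perm.permMatrix_mul_eq_submatrix]
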